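/- A Boolean function f : 𝔽₂ⁿ → 𝔽₂ᵐ is fully balanced if and only if both of the following hold: (1) the image of f, Set.range f, is an affine subspace of 𝔽₂ᵐ, i.e., there exist a ∈ 𝔽₂ᵐ and a linear subspace W ≤ 𝔽₂ᵐ with Set.range f = a + W; and (2) all fibers over the image have equal cardinality, i.e., for all u, v ∈ Set.range f, #(f⁻¹{u}) = #(f⁻¹{v}). -/
import Mathlib

/-- The dot product of two vectors in `𝔽₂ᵏ`. -/
def dotp {k : ℕ} (u v : Fin k → ZMod 2) : ZMod 2 := ∑ i, u i * v i

/-- `f` is `y`-balanced: `y·f(x) = 0` for exactly half of the inputs `x`. -/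
def IsBalancedFor {n m : ℕ} (f : (Fin n → ZMod 2) → Fin m → ZMod 2)
    (y : Fin m → ZMod 2) : Prop :=
  (Finset.univ.filter fun x => dotp y (f x) = 0).card =
    (Finset.univ.filter fun x => dotp y (f x) = 1).card

/-- `f` is `y`-constant: the map `x ↦ y·f(x)` is constant. -/
def IsConstantFor {n m : ℕ} (f : (Fin n → ZMod 2) → Fin m → ZMod 2)
    (y : Fin m → ZMod 2) : Prop :=
  ∀ x x' : Fin n → ZMod 2, dotp y (f x) = dotp y (f x')

/-- `f` is fully balanced: every `y` either balances `f` or makes it constant. -/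
def FullyBalanced {n m : ℕ} (f : (Fin n → ZMod 2) → Fin m → ZMod 2) : Prop :=
  ∀ y : Fin m → ZMod 2, IsBalancedFor f y ∨ IsConstantFor f y

namespace FBaux
open Finset

def χ (a : ZMod 2) : ℤ := 1 - 2 * a.val

lemma χ_add (a b : ZMod 2) : χ (a + b) = χ a * χ b := by revert a b; decide
lemma χ_zero : χ (0 : ZMod 2) = 1 := by decide
lemma χ_one : χ (1 : ZMod 2) = -1 := by decide
lemma z2_ne_zero (a : ZMod 2) (h : a ≠ 0) : a = 1 := by revert a; decide
lemma z2_add_self (a : ZMod 2) : a + a = 0 := by revert a; decide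
lemma z2_add_cancel (a b : ZMod 2) : a + (b + a) = b := by revert a b; decide

lemma dotp_add_right {k : ℕ} (y u v : Fin k → ZMod 2) :
    dotp y (u + v) = dotp y u + dotp y v := by
  simp [dotp, mul_add, Finset.sum_add_distrib]

lemma dotp_add_left {k : ℕ} (y z v : Fin k → ZMod 2) :
    dotp (y + z) v = dotp y v + dotp z v := by
  simp [dotp, add_mul, Finset.sum_add_distrib]

lemma dotp_zero_right {k : ℕ} (y : Fin k → ZMod 2) : dotp y 0 = 0 := by simp [dotp]
lemma dotp_zero_left {k : ℕ} (y : Fin k → ZMod 2) : dotp 0 y = 0 := by simp [dotp]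

lemma dotp_single {k : ℕ} (i : Fin k) (v : Fin k → ZMod 2) :
    dotp (Pi.single i 1) v = v i := by
  simp [dotp, Pi.single_apply, ite_mul]

lemma dotp_smul_right {k : ℕ} (c : ZMod 2) (y v : Fin k → ZMod 2) :
    dotp y (c • v) = c * dotp y v := by
  simp only [dotp, Finset.mul_sum, Pi.smul_apply, smul_eq_mul]
  exact Finset.sum_congr rfl fun i _ => by ring

lemma vec_add_eq_zero_iff {k : ℕ} (u w : Fin k → ZMod 2) : u + w = 0 ↔ w = u := by
  have key : ∀ a b : ZMod 2, a + b = 0 ↔ b = a := by decide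
  constructor
  · intro h; funext i; exact (key _ _).1 (congrFun h i)
  · intro h; subst h; funext i; exact (key _ _).2 rfl

lemma sum_χ {k : ℕ} (v : Fin k → ZMod 2) :
    ∑ y : Fin k → ZMod 2, χ (dotp y v) = if v = 0 then 2 ^ k else 0 := by
  by_cases hv : v = 0
  · subst hv
    simp [dotp_zero_right, χ_zero, Finset.card_univ]
  · simp only [if_neg hv]
    obtain ⟨i, hi⟩ : ∃ i, v i ≠ 0 := by
      by_contra h; push_neg at h; exact hv (funext h)
    have hvi : v i = 1 := z2_ne_zero _ hi
    set e : Fin k → ZMod 2 := Pi.single i 1 with he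
    have h1 : ∑ y : Fin k → ZMod 2, χ (dotp y v)
        = ∑ y : Fin k → ZMod 2, χ (dotp (e + y) v) :=
      (Fintype.sum_equiv (Equiv.addLeft e) (fun y => χ (dotp (e + y) v))
        (fun y => χ (dotp y v)) (fun y => rfl)).symm
    have h2 : ∀ y : Fin k → ZMod 2, χ (dotp (e + y) v) = - χ (dotp y v) := by
      intro y
      rw [dotp_add_left, χ_add, he, dotp_single, hvi, χ_one]; ring
    simp only [h2, Finset.sum_neg_distrib] at h1
    linarith

section main
variable {n m : ℕ}

noncomputable def cF (f : (Fin n → ZMod 2) → Fin m → ZMod 2) (u : Fin m → ZMod 2) : ℕ :=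
  (Finset.univ.filter fun x => f x = u).card

lemma natCard_preimage (f : (Fin n → ZMod 2) → Fin m → ZMod 2) (u : Fin m → ZMod 2) :
    Nat.card (f ⁻¹' {u}) = cF f u := by
  classical
  rw [Nat.card_eq_fintype_card]
  simp [cF, Fintype.card_subtype, Set.mem_preimage, Set.mem_singleton_iff]

lemma sum_split (f : (Fin n → ZMod 2) → Fin m → ZMod 2) (y : Fin m → ZMod 2) :
    ∑ x : Fin n → ZMod 2, χ (dotp y (f x)) =
      ((Finset.univ.filter fun x => dotp y (f x) = 0).card : ℤ) -
      ((Finset.univ.filter fun x => dotp y (f x) = 1).card : ℤ) := by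
  classical
  rw [← Finset.sum_filter_add_sum_filter_not Finset.univ (fun x => dotp y (f x) = 0)]
  have h1 : ∑ x ∈ Finset.univ.filter (fun x => dotp y (f x) = 0), χ (dotp y (f x))
      = ((Finset.univ.filter fun x => dotp y (f x) = 0).card : ℤ) := by
    rw [Finset.sum_congr rfl (fun x hx => by
      rw [(Finset.mem_filter.1 hx).2, χ_zero])]
    simp
  have h2 : ∑ x ∈ Finset.univ.filter (fun x => ¬ dotp y (f x) = 0), χ (dotp y (f x))
      = -((Finset.univ.filter fun x => dotp y (f x) = 1).card : ℤ) := by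
    have : Finset.univ.filter (fun x => ¬ dotp y (f x) = 0) =
        Finset.univ.filter (fun x => dotp y (f x) = 1) := by
      apply Finset.filter_congr; intro x _
      constructor
      · exact fun h => z2_ne_zero _ h
      · intro h h0; rw [h] at h0; exact one_ne_zero h0
    rw [this, Finset.sum_congr rfl (fun x hx => by
      rw [(Finset.mem_filter.1 hx).2, χ_one])]
    simp
  rw [h1, h2]; ring

lemma balanced_iff (f : (Fin n → ZMod 2) → Fin m → ZMod 2) (y : Fin m → ZMod 2) :
    IsBalancedFor f y ↔ ∑ x : Fin n → ZMod 2, χ (dotp y (f x)) = 0 := by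
  rw [sum_split, IsBalancedFor]
  constructor
  · intro h; rw [h]; ring
  · intro h
    have := sub_eq_zero.1 h
    exact_mod_cast this

lemma sum_const_of (f : (Fin n → ZMod 2) → Fin m → ZMod 2) (y : Fin m → ZMod 2)
    (h : IsConstantFor f y) :
    ∑ x : Fin n → ZMod 2, χ (dotp y (f x)) = 2 ^ n * χ (dotp y (f fun _ => 0)) := by
  rw [Finset.sum_congr rfl (fun x _ => by rw [h x (fun _ => 0)])]
  simp [Finset.card_univ, mul_comm]

lemma sum_comp_fib (f : (Fin n → ZMod 2) → Fin m → ZMod 2) (g : (Fin m → ZMod 2) → ℤ) :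
    ∑ x : Fin n → ZMod 2, g (f x) = ∑ u : Fin m → ZMod 2, (cF f u : ℤ) * g u := by
  classical
  rw [← Finset.sum_fiberwise Finset.univ f (fun x => g (f x))]
  refine Finset.sum_congr rfl fun u _ => ?_
  rw [Finset.sum_congr rfl (fun x hx => by rw [(Finset.mem_filter.1 hx).2]), Finset.sum_const,
    cF]
  simp [mul_comm]

lemma key_identity (f : (Fin n → ZMod 2) → Fin m → ZMod 2) (u : Fin m → ZMod 2) :
    (2 ^ m : ℤ) * (cF f u : ℤ) =
      ∑ y : Fin m → ZMod 2, χ (dotp y u) * (∑ x : Fin n → ZMod 2, χ (dotp y (f x))) := by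
  classical
  have : ∀ y : Fin m → ZMod 2, χ (dotp y u) * (∑ x : Fin n → ZMod 2, χ (dotp y (f x)))
      = ∑ x : Fin n → ZMod 2, χ (dotp y (u + f x)) := by
    intro y
    rw [Finset.mul_sum]
    exact Finset.sum_congr rfl fun x _ => by rw [dotp_add_right, χ_add]
  simp only [this]
  rw [Finset.sum_comm]
  have : ∀ x : Fin n → ZMod 2, ∑ y : Fin m → ZMod 2, χ (dotp y (u + f x))
      = if f x = u then (2 ^ m : ℤ) else 0 := by
    intro x
    rw [sum_χ]
    congr 1
    simp only [eq_iff_iff]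
    rw [vec_add_eq_zero_iff]
  simp only [this]
  rw [Finset.sum_ite, Finset.sum_const, Finset.sum_const_zero]
  simp [cF, mul_comm]
end main

lemma vec_add_cancel {k : ℕ} (v w : Fin k → ZMod 2) : v + (w + v) = w :=
  funext fun i => z2_add_cancel (v i) (w i)

lemma vec_add_cancel' {k : ℕ} (v w : Fin k → ZMod 2) : (v + w) + v = w := by
  have : ∀ a b : ZMod 2, (a + b) + a = b := by decide
  exact funext fun i => this (v i) (w i)

lemma vec_add_right_cancel {k : ℕ} (v w : Fin k → ZMod 2) : (w + v) + v = w := by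
  have : ∀ a b : ZMod 2, (b + a) + a = b := by decide
  exact funext fun i => this (v i) (w i)

lemma χ_flip (t : ZMod 2) : χ t + χ (t + 1) = 0 := by revert t; decide

end FBaux

open FBaux in
/-- A Boolean function is fully balanced if and only if its image is an affine subspace
and all fibers over points of the image have the same cardinality. -/
theorem fullyBalanced_iff_affine_image_and_equal_fibers (n m : ℕ)
    (f : (Fin n → ZMod 2) → Fin m → ZMod 2) :
    FullyBalanced f ↔
      ((∃ (a : Fin m → ZMod 2) (W : Submodule (ZMod 2) (Fin m → ZMod 2)),
          Set.range f = (fun w => a + w) '' (W : Set (Fin m → ZMod 2))) ∧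
        ∀ u ∈ Set.range f, ∀ v ∈ Set.range f,
          Nat.card (f ⁻¹' {u}) = Nat.card (f ⁻¹' {v})) := by
  classical
  constructor
  · intro h
    set a := f (fun _ => 0) with ha
    set W : Submodule (ZMod 2) (Fin m → ZMod 2) :=
      { carrier := {v | ∀ y, IsConstantFor f y → dotp y v = 0}
        add_mem' := by
          intro u v hu hv y hy
          rw [dotp_add_right, hu y hy, hv y hy, add_zero]
        zero_mem' := fun y _ => dotp_zero_right y
        smul_mem' := by
          intro c v hv y hy
          rw [dotp_smul_right, hv y hy, mul_zero] } with hW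
    have memW : ∀ v, v ∈ W ↔ ∀ y, IsConstantFor f y → dotp y v = 0 := fun v => Iff.rfl
    have hmemW : ∀ x, f x + a ∈ W := by
      intro x
      rw [memW]
      intro y hy
      rw [dotp_add_right, hy x (fun _ => 0), z2_add_self]
    set T : Finset (Fin m → ZMod 2) :=
      Finset.univ.filter (fun y => IsConstantFor f y) with hT
    have key2 : ∀ u : Fin m → ZMod 2, (u + a ∈ W) →
        (2 ^ m : ℤ) * (cF f u : ℤ) = 2 ^ n * (T.card : ℤ) := by
      intro u hu
      rw [key_identity]
      rw [← Finset.sum_filter_add_sum_filter_not Finset.univ (fun y => IsConstantFor f y)]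
      have hA : ∑ y ∈ Finset.univ.filter (fun y => IsConstantFor f y),
          χ (dotp y u) * (∑ x : Fin n → ZMod 2, χ (dotp y (f x)))
          = ∑ _y ∈ T, (2 ^ n : ℤ) := by
        refine Finset.sum_congr rfl fun y hy => ?_
        have hyc : IsConstantFor f y := (Finset.mem_filter.1 hy).2
        rw [sum_const_of f y hyc]
        have h0 : dotp y (u + a) = 0 := (memW _).1 hu y hyc
        rw [dotp_add_right] at h0
        have hχ : χ (dotp y u) * χ (dotp y a) = 1 := by
          rw [← χ_add, h0, χ_zero]
        calc χ (dotp y u) * (2 ^ n * χ (dotp y a))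
            = 2 ^ n * (χ (dotp y u) * χ (dotp y a)) := by ring
          _ = 2 ^ n := by rw [hχ, mul_one]
      have hB : ∑ y ∈ Finset.univ.filter (fun y => ¬ IsConstantFor f y),
          χ (dotp y u) * (∑ x : Fin n → ZMod 2, χ (dotp y (f x))) = 0 := by
        refine Finset.sum_eq_zero fun y hy => ?_
        have hyc : ¬ IsConstantFor f y := (Finset.mem_filter.1 hy).2
        have hb : IsBalancedFor f y := (h y).resolve_right hyc
        rw [(balanced_iff f y).1 hb, mul_zero]
      rw [hA, hB, add_zero, Finset.sum_const]
      simp [mul_comm]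
    have hTpos : 0 < T.card := by
      refine Finset.card_pos.2 ⟨0, ?_⟩
      rw [hT, Finset.mem_filter]
      exact ⟨Finset.mem_univ _, fun x x' => by rw [dotp_zero_left, dotp_zero_left]⟩
    constructor
    · refine ⟨a, W, ?_⟩
      ext u
      constructor
      · rintro ⟨x, rfl⟩
        exact ⟨f x + a, hmemW x, vec_add_cancel a (f x)⟩
      · rintro ⟨w, hw, rfl⟩
        have hmem : (a + w) + a ∈ W := by
          rw [vec_add_cancel' a w]; exact hw
        have := key2 (a + w) hmem
        have hcF : cF f (a + w) ≠ 0 := by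
          intro h0
          rw [h0] at this
          simp only [Nat.cast_zero, mul_zero] at this
          have h1 : (0:ℤ) < 2 ^ n * (T.card : ℤ) := by positivity
          omega
        obtain ⟨x, hx⟩ := Finset.card_pos.1 (Nat.pos_of_ne_zero hcF)
        exact ⟨x, (Finset.mem_filter.1 hx).2⟩
    · intro u hu v hv
      rw [natCard_preimage, natCard_preimage]
      obtain ⟨x, hx⟩ := hu
      obtain ⟨x', hx'⟩ := hv
      have h1 := key2 u (by rw [← hx]; exact hmemW x)
      have h2 := key2 v (by rw [← hx']; exact hmemW x')
      have : (2 ^ m : ℤ) * (cF f u : ℤ) = (2 ^ m : ℤ) * (cF f v : ℤ) := by rw [h1, h2]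
      have := mul_left_cancel₀ (by positivity : (2 ^ m : ℤ) ≠ 0) this
      exact_mod_cast this
  · rintro ⟨⟨a, W, hrange⟩, hfib⟩ y
    by_cases hWy : ∀ w ∈ W, dotp y w = 0
    · right
      intro x x'
      have hx : f x ∈ Set.range f := ⟨x, rfl⟩
      have hx' : f x' ∈ Set.range f := ⟨x', rfl⟩
      rw [hrange] at hx hx'
      obtain ⟨w, hw, hfw⟩ := hx
      obtain ⟨w', hw', hfw'⟩ := hx'
      rw [← hfw, ← hfw', dotp_add_right, dotp_add_right, hWy w hw, hWy w' hw']
    · left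
      push_neg at hWy
      obtain ⟨w₀, hw₀W, hw₀⟩ := hWy
      have hw₀1 : dotp y w₀ = 1 := z2_ne_zero _ hw₀
      have hw₀ne : w₀ ≠ 0 := by
        intro h0; rw [h0, dotp_zero_right] at hw₀1; exact zero_ne_one hw₀1
      rw [balanced_iff, sum_comp_fib f (fun u => χ (dotp y u))]
      have harange : a ∈ Set.range f := by
        rw [hrange]; exact ⟨0, W.zero_mem, add_zero a⟩
      have hc : ∀ u ∈ Set.range f, (cF f u : ℤ) = (cF f a : ℤ) := by
        intro u hu
        have := hfib u hu a harange
        rw [natCard_preimage, natCard_preimage] at this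
        exact_mod_cast this
      set WF : Finset (Fin m → ZMod 2) := Finset.univ.filter (fun w => w ∈ W) with hWF
      have hsplit : ∑ u : Fin m → ZMod 2, (cF f u : ℤ) * χ (dotp y u)
          = ∑ u ∈ Finset.univ.filter (fun u => u ∈ Set.range f),
              (cF f a : ℤ) * χ (dotp y u) := by
        rw [← Finset.sum_filter_add_sum_filter_not Finset.univ (fun u => u ∈ Set.range f)]
        have hz : ∑ u ∈ Finset.univ.filter (fun u => ¬ u ∈ Set.range f),
            (cF f u : ℤ) * χ (dotp y u) = 0 := by
          refine Finset.sum_eq_zero fun u hu => ?_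
          have hnu : ¬ u ∈ Set.range f := (Finset.mem_filter.1 hu).2
          have : cF f u = 0 := by
            rw [cF, Finset.card_eq_zero, Finset.filter_eq_empty_iff]
            intro x _ hx
            exact hnu ⟨x, hx⟩
          rw [this]; simp
        rw [hz, add_zero]
        refine Finset.sum_congr rfl fun u hu => ?_
        rw [hc u (Finset.mem_filter.1 hu).2]
      rw [hsplit]
      have himg : Finset.univ.filter (fun u => u ∈ Set.range f)
          = WF.image (fun w => a + w) := by
        ext u
        simp only [Finset.mem_filter, Finset.mem_univ, true_and, Finset.mem_image, hWF,
          hrange, Set.mem_image, SetLike.mem_coe]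
      rw [himg, Finset.sum_image (fun w _ w' _ hww => add_left_cancel hww)]
      have hstep : ∑ w ∈ WF, (cF f a : ℤ) * χ (dotp y (a + w))
          = ((cF f a : ℤ) * χ (dotp y a)) * ∑ w ∈ WF, χ (dotp y w) := by
        rw [Finset.mul_sum]
        refine Finset.sum_congr rfl fun w _ => ?_
        rw [dotp_add_right, χ_add]; ring
      rw [hstep]
      have hzero : ∑ w ∈ WF, χ (dotp y w) = 0 := by
        refine Finset.sum_involution (fun w _ => w + w₀) ?_ ?_ ?_ ?_
        · intro w _
          rw [dotp_add_right, hw₀1]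
          exact χ_flip (dotp y w)
        · intro w _ _ heq
          have heq' : w + w₀ = w := heq
          apply hw₀ne
          calc w₀ = (w + w₀) + w := (vec_add_cancel' w w₀).symm
            _ = w + w := by rw [heq']
            _ = 0 := funext fun i => z2_add_self (w i)
        · intro w hw
          show w + w₀ ∈ WF
          rw [hWF, Finset.mem_filter]
          refine ⟨Finset.mem_univ _, W.add_mem ?_ hw₀W⟩
          exact (Finset.mem_filter.1 hw).2
        · intro w _
          show (w + w₀) + w₀ = w
          exact vec_add_right_cancel w₀ w
      rw [hzero, mul_zero]
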